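/- arXiv:1508.06947 — 9 statements merged into one kernel-verified Lean document; each statement's English description precedes it below -/
import Mathlib

section
/- For all real x with 0 < x < 1, (arcsin x / x)^2 + (arctan x / x) < 2 + ((π² + π − 8)/π) · x³ · arctan x. -/
/-!
Multiplying by `π x²`, the claim becomes
`π arcsin² x < 2π x² + (κ x⁴ - π) · x arctan x` with `κ = π² + π - 8`.
Bound `arcsin x` from above, and `arctan x` from above or below according to the sign of
`κ x⁴ - π`; each case becomes a polynomial inequality with `π`-dependent coefficients.
For `x ≤ 7/10` we use the quintic bounds `arcsin x ≤ x + x³/6 + 0.13 x⁵` and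
`arctan x ≤ x - x³/3 + x⁵/5`. For `x > 7/10` we write `s = √(2(1 - x))` and use
`arcsin x ≤ π/2 - s` (from `cos θ ≥ 1 - θ²/2` at `θ = arccos x`), together with the quintic
bound for `arctan` when `κ x⁴ ≤ π` and with `arctan x ≥ π/4 - (1 - x)/(1 + x)` when `κ x⁴ > π`.
The resulting polynomials in `s` are shown positive by bounding every `π`-dependent
coefficient by a rational one and checking the rational polynomial on the relevant interval.
-/

open Real Set

lemma arctan_le_self {y : ℝ} (hy : 0 ≤ y) : arctan y ≤ y := by
  simpa only [tan_arctan] using le_tan (arctan_nonneg.2 hy) (arctan_lt_pi_div_two y)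

lemma pi_div_four_sub_le_arctan {x : ℝ} (h0 : 0 ≤ x) (h1 : x ≤ 1) :
    π / 4 - (1 - x) / (1 + x) ≤ arctan x := by
  have hx : (0 : ℝ) < 1 + x := by linarith
  have hnum : x + (1 - x) / (1 + x) = (1 + x ^ 2) / (1 + x) := by field_simp; ring
  have hden : 1 - x * ((1 - x) / (1 + x)) = (1 + x ^ 2) / (1 + x) := by field_simp; ring
  have hpos : 0 < (1 + x ^ 2) / (1 + x) := by positivity
  have hsum : arctan x + arctan ((1 - x) / (1 + x)) = π / 4 := by
    rw [arctan_add (by linarith), hnum, hden, div_self hpos.ne', arctan_one]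
  linarith [arctan_le_self (div_nonneg (sub_nonneg.2 h1) hx.le)]

lemma arcsin_le_pi_div_two_sub_sqrt {x : ℝ} (h0 : -1 ≤ x) (h1 : x ≤ 1) :
    arcsin x ≤ π / 2 - √(2 * (1 - x)) := by
  have hcos : 1 - arccos x ^ 2 / 2 ≤ x := by
    simpa only [cos_arccos h0 h1] using one_sub_sq_div_two_le_cos (x := arccos x)
  have hsqrt : √(2 * (1 - x)) ≤ arccos x := sqrt_le_iff.2 ⟨arccos_nonneg x, by linarith⟩
  linarith [arccos_eq_pi_div_two_sub_arcsin x]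

lemma arctan_le_quintic {x : ℝ} (hx : 0 ≤ x) : arctan x ≤ x - x ^ 3 / 3 + x ^ 5 / 5 := by
  have hmono : Monotone fun t : ℝ => t - t ^ 3 / 3 + t ^ 5 / 5 - arctan t := by
    refine monotone_of_hasDerivAt_nonneg (f' := fun t => t ^ 6 / (1 + t ^ 2)) (fun t => ?_)
      fun t => by positivity
    have hpoly : HasDerivAt (fun t : ℝ => t - t ^ 3 / 3 + t ^ 5 / 5) (1 - t ^ 2 + t ^ 4) t :=
      (((hasDerivAt_id t).sub ((hasDerivAt_pow 3 t).div_const 3)).add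
        ((hasDerivAt_pow 5 t).div_const 5)).congr_deriv (by ring)
    exact (hpoly.sub (hasDerivAt_arctan t)).congr_deriv (by field_simp; ring)
  simpa using hmono hx

lemma arcsin_le_quintic {x : ℝ} (h0 : 0 ≤ x) (h1 : x ≤ 7 / 10) :
    arcsin x ≤ x + x ^ 3 / 6 + 13 / 100 * x ^ 5 := by
  have hmono : MonotoneOn (fun t => t + t ^ 3 / 6 + 13 / 100 * t ^ 5 - arcsin t)
      (Icc 0 (7 / 10)) := by
    refine monotoneOn_of_hasDerivWithinAt_nonneg (convex_Icc _ _)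
      (f' := fun t => 1 + t ^ 2 / 2 + 13 / 20 * t ^ 4 - 1 / √(1 - t ^ 2))
      (by fun_prop) (fun t ht => ?_) (fun t ht => ?_) <;>
      rw [interior_Icc] at ht <;> obtain ⟨ht0, ht1⟩ := ht
    · exact HasDerivAt.hasDerivWithinAt <|
        ((((hasDerivAt_id t).add ((hasDerivAt_pow 3 t).div_const 6)).add
          ((hasDerivAt_pow 5 t).const_mul (13 / 100))).sub
          (hasDerivAt_arcsin (by linarith) (by linarith))).congr_deriv (by ring)
    · have hpos : 0 < 1 - t ^ 2 := by nlinarith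
      have hu : 0 < √(1 - t ^ 2) := sqrt_pos.2 hpos
      have hsq : 1 ≤ ((1 + t ^ 2 / 2 + 13 / 20 * t ^ 4) * √(1 - t ^ 2)) ^ 2 := by
        rw [mul_pow, sq_sqrt hpos.le]
        have h49 : t ^ 2 ≤ 49 / 100 := by nlinarith
        nlinarith [mul_nonneg (sub_nonneg.2 h49) (pow_nonneg ht0.le 4),
          mul_nonneg (sub_nonneg.2 h49) (pow_nonneg ht0.le 6),
          mul_nonneg (sub_nonneg.2 h49) (pow_nonneg ht0.le 8),
          pow_nonneg ht0.le 10, pow_nonneg ht0.le 4]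
      rw [sub_nonneg, div_le_iff₀ hu]
      exact (one_le_sq_iff₀ (by positivity)).1 hsq
  simpa using hmono ⟨le_rfl, by norm_num⟩ ⟨h0, h1⟩ h0

lemma pi_bounds : 3.141592 < π ∧ π < 3.141593 ∧ 9.8695 < π ^ 2 ∧ π ^ 2 < 9.8697 ∧
    31.006 < π ^ 3 ∧ π ^ 3 < 31.007 := by
  have hl := pi_gt_d6
  have hu := pi_lt_d6
  have hpow (n : ℕ) (hn : n ≠ 0) : 3.141592 ^ n < π ^ n ∧ π ^ n < 3.141593 ^ n :=
    ⟨pow_lt_pow_left₀ hl (by norm_num) hn, pow_lt_pow_left₀ hu pi_pos.le hn⟩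
  obtain ⟨h2l, h2u⟩ := hpow 2 two_ne_zero
  obtain ⟨h3l, h3u⟩ := hpow 3 three_ne_zero
  norm_num at h2l h2u h3l h3u
  refine ⟨hl, hu, ?_, ?_, ?_, ?_⟩ <;> linarith

lemma coeff_mul_pow_four_lt_pi {x : ℝ} (h0 : 0 ≤ x) (h1 : x ≤ 88 / 100) :
    (π ^ 2 + π - 8) * x ^ 4 < π := by
  obtain ⟨hπl, hπu, hp2l, hp2u, -, -⟩ := pi_bounds
  have := mul_le_mul_of_nonneg_left (pow_le_pow_left₀ h0 h1 4)
    (by linarith : 0 ≤ π ^ 2 + π - 8)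
  linarith

lemma pi_lt_coeff_mul_pow_four {x : ℝ} (h : 89 / 100 ≤ x) :
    π < (π ^ 2 + π - 8) * x ^ 4 := by
  obtain ⟨hπl, hπu, hp2l, hp2u, -, -⟩ := pi_bounds
  have := mul_le_mul_of_nonneg_left (pow_le_pow_left₀ (by norm_num) h 4)
    (by linarith : 0 ≤ π ^ 2 + π - 8)
  linarith

lemma pi_mul_quintic_sq_lt {x : ℝ} (h0 : 0 < x) (h1 : x ≤ 7 / 10) :
    π * (x + x ^ 3 / 6 + 13 / 100 * x ^ 5) ^ 2
      < 2 * π * x ^ 2 + ((π ^ 2 + π - 8) * x ^ 4 - π) * (x * (x - x ^ 3 / 3 + x ^ 5 / 5)) := by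
  obtain ⟨hπl, hπu, hp2l, hp2u, -, -⟩ := pi_bounds
  have hx2 : x ^ 2 ≤ 49 / 100 := by nlinarith
  -- the difference of the two sides is `x⁶` times this quadratic in `x²`
  have hfac : 0 < (π ^ 2 + π - 8 - (1 / 5 + 1 / 36 + 13 / 50) * π)
      - (π ^ 2 + π - 8 + 13 / 100 * π) / 3 * x ^ 2
      + ((π ^ 2 + π - 8) / 5 - 169 / 10000 * π) * x ^ 4 := by
    nlinarith [mul_nonneg (by linarith : (0 : ℝ) ≤ (π ^ 2 + π - 8) / 5 - 169 / 10000 * π)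
      (pow_nonneg h0.le 4)]
  linarith [mul_pos (pow_pos h0 6) hfac]

lemma pi_mul_pi_div_two_sub_sq_lt_of_ge {x s : ℝ} (hs0 : 46 / 100 ≤ s) (hs1 : s ≤ 7746 / 10000)
    (hx : x = 1 - s ^ 2 / 2) :
    π * (π / 2 - s) ^ 2
      < 2 * π * x ^ 2 + ((π ^ 2 + π - 8) * x ^ 4 - π) * (x * (x - x ^ 3 / 3 + x ^ 5 / 5)) := by
  obtain ⟨hπl, hπu, hp2l, hp2u, hp3l, hp3u⟩ := pi_bounds
  subst hx
  have hs : 0 ≤ s := by linarith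
  have hrat : 0 < 15 / 100 + 9.8695 * s - 19.857 * s ^ 2 + 18.37 * s ^ 4 - 14.822 * s ^ 6
      + 10.02 * s ^ 8 - 5.792 * s ^ 10 + 2.62 * s ^ 12 - 0.8353 * s ^ 14 - 0.0196 * s ^ 18 := by
    have hI : 0 ≤ (s - 46 / 100) * (7746 / 10000 - s) := mul_nonneg (by linarith) (by linarith)
    nlinarith [mul_nonneg hI (pow_nonneg hs 2),
      mul_nonneg hI (pow_nonneg hs 4), mul_nonneg hI (pow_nonneg hs 6),
      mul_nonneg hI (pow_nonneg hs 8), mul_nonneg hI (pow_nonneg hs 10),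
      mul_nonneg hI (pow_nonneg hs 12), mul_nonneg hI (pow_nonneg hs 14),
      mul_nonneg hI (pow_nonneg hs 16), sq_nonneg (s - 77 / 100), sq_nonneg (s - 6 / 10)]
  linarith [hrat,
    mul_nonneg (by linarith : (0 : ℝ) ≤ π ^ 2 - 9.8695) hs,
    mul_nonneg (by linarith : (0 : ℝ) ≤ 64 / 3 - 71 / 15 * π - 8 / 3 * π ^ 2 + 19.857)
      (pow_nonneg hs 2),
    mul_nonneg (by linarith : (0 : ℝ) ≤ -88 / 3 + 11 / 3 * π + 11 / 3 * π ^ 2 - 18.37)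
      (pow_nonneg hs 4),
    mul_nonneg (by linarith : (0 : ℝ) ≤ 76 / 3 - 17 / 6 * π - 19 / 6 * π ^ 2 + 14.822)
      (pow_nonneg hs 6),
    mul_nonneg (by linarith : (0 : ℝ) ≤ -101 / 6 + 31 / 16 * π + 101 / 48 * π ^ 2 - 10.02)
      (pow_nonneg hs 8),
    mul_nonneg (by linarith : (0 : ℝ) ≤ 283 / 30 - 137 / 120 * π - 283 / 240 * π ^ 2 + 5.792)
      (pow_nonneg hs 10),
    mul_nonneg (by linarith : (0 : ℝ) ≤ -101 / 24 + 251 / 480 * π + 101 / 192 * π ^ 2 - 2.62)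
      (pow_nonneg hs 12),
    mul_nonneg (by linarith : (0 : ℝ) ≤ 4 / 3 - 1 / 6 * π - 1 / 6 * π ^ 2 + 0.8353)
      (pow_nonneg hs 14),
    mul_nonneg (by linarith : (0 : ℝ) ≤ -13 / 48 + 13 / 384 * π + 13 / 384 * π ^ 2)
      (pow_nonneg hs 16),
    mul_nonneg (by linarith : (0 : ℝ) ≤ 1 / 32 - 1 / 256 * π - 1 / 256 * π ^ 2 + 0.0196)
      (pow_nonneg hs 18),
    mul_nonneg (by linarith : (0 : ℝ) ≤ -1 / 640 + 1 / 5120 * π + 1 / 5120 * π ^ 2)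
      (pow_nonneg hs 20),
    (by linarith : (0 : ℝ) < -104 / 15 + 2 * π + 13 / 15 * π ^ 2 - 1 / 4 * π ^ 3 - 149 / 1000)]

lemma pi_mul_pi_div_two_sub_sq_lt_of_le {x s : ℝ} (hs0 : 0 < s) (hs1 : s ≤ 49 / 100)
    (hx : x = 1 - s ^ 2 / 2) :
    π * (π / 2 - s) ^ 2
      < 2 * π * x ^ 2 + ((π ^ 2 + π - 8) * x ^ 4 - π) * (x * (π / 4 - (1 - x) / (1 + x))) := by
  obtain ⟨hπl, hπu, hp2l, hp2u, hp3l, hp3u⟩ := pi_bounds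
  have hs := hs0.le
  have h4s : 0 < 4 - s ^ 2 := by nlinarith
  have hfrac : (1 - x) / (1 + x) = s ^ 2 / (4 - s ^ 2) := by
    rw [div_eq_div_iff (by nlinarith) h4s.ne', hx]
    ring
  rw [hfrac, ← sub_pos]
  subst hx
  have hid : 2 * π * (1 - s ^ 2 / 2) ^ 2 + ((π ^ 2 + π - 8) * (1 - s ^ 2 / 2) ^ 4 - π)
        * ((1 - s ^ 2 / 2) * (π / 4 - s ^ 2 / (4 - s ^ 2))) - π * (π / 2 - s) ^ 2
      = s * (4 * π ^ 2 + (8 + 8 * π - 3 * π ^ 2 - 5 / 2 * π ^ 3) * s - π ^ 2 * s ^ 2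
        + (-20 - 18 * π + 11 / 2 * π ^ 2 + 25 / 8 * π ^ 3) * s ^ 3
        + (20 + 12 * π - 35 / 8 * π ^ 2 - 15 / 8 * π ^ 3) * s ^ 5
        + (-10 - 15 / 4 * π + 15 / 8 * π ^ 2 + 5 / 8 * π ^ 3) * s ^ 7
        + (5 / 2 + 9 / 16 * π - 27 / 64 * π ^ 2 - 7 / 64 * π ^ 3) * s ^ 9
        + (-1 / 4 - 1 / 32 * π + 5 / 128 * π ^ 2 + 1 / 128 * π ^ 3) * s ^ 11) / (4 - s ^ 2) := by
    field_simp
    ring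
  rw [hid]
  refine div_pos (mul_pos hs0 ?_) h4s
  have hrat : 0 < 39.478 - 74 * s - 9.8697 * s ^ 2 + 74 * s ^ 3 - 43.62 * s ^ 5 - 3.3 * s ^ 9 := by
    nlinarith [mul_nonneg (mul_nonneg hs hs) hs,
      mul_nonneg (sub_nonneg.2 hs1) (pow_nonneg hs 3),
      mul_nonneg (sub_nonneg.2 hs1) (pow_nonneg hs 5),
      mul_nonneg (sub_nonneg.2 hs1) (pow_nonneg hs 9),
      sq_nonneg s, sq_nonneg (s - 49 / 100)]
  linarith [hrat,
    mul_nonneg (by linarith : (0 : ℝ) ≤ 8 + 8 * π - 3 * π ^ 2 - 5 / 2 * π ^ 3 + 74) hs,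
    mul_nonneg (by linarith : (0 : ℝ) ≤ 9.8697 - π ^ 2) (pow_nonneg hs 2),
    mul_nonneg (by linarith : (0 : ℝ) ≤ -20 - 18 * π + 11 / 2 * π ^ 2 + 25 / 8 * π ^ 3 - 74)
      (pow_nonneg hs 3),
    mul_nonneg (by linarith : (0 : ℝ) ≤ 20 + 12 * π - 35 / 8 * π ^ 2 - 15 / 8 * π ^ 3 + 43.62)
      (pow_nonneg hs 5),
    mul_nonneg (by linarith : (0 : ℝ) ≤ -10 - 15 / 4 * π + 15 / 8 * π ^ 2 + 5 / 8 * π ^ 3)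
      (pow_nonneg hs 7),
    mul_nonneg (by linarith : (0 : ℝ) ≤ 5 / 2 + 9 / 16 * π - 27 / 64 * π ^ 2 - 7 / 64 * π ^ 3 + 3.3)
      (pow_nonneg hs 9),
    mul_nonneg (by linarith : (0 : ℝ) ≤ -1 / 4 - 1 / 32 * π + 5 / 128 * π ^ 2 + 1 / 128 * π ^ 3)
      (pow_nonneg hs 11)]

lemma pi_mul_arcsin_sq_lt_of_le_seven_tenths {x : ℝ} (h0 : 0 < x) (h1 : x ≤ 7 / 10) :
    π * arcsin x ^ 2 < 2 * π * x ^ 2 + ((π ^ 2 + π - 8) * x ^ 4 - π) * (x * arctan x) := by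
  have hcoeff : (π ^ 2 + π - 8) * x ^ 4 - π ≤ 0 :=
    sub_nonpos.2 (coeff_mul_pow_four_lt_pi h0.le (by linarith)).le
  have hasin : arcsin x ^ 2 ≤ (x + x ^ 3 / 6 + 13 / 100 * x ^ 5) ^ 2 :=
    pow_le_pow_left₀ (arcsin_nonneg.2 h0.le) (arcsin_le_quintic h0.le h1) 2
  have hatan := mul_le_mul_of_nonpos_left
    (mul_le_mul_of_nonneg_left (arctan_le_quintic h0.le) h0.le) hcoeff
  linarith [pi_mul_quintic_sq_lt h0 h1, mul_le_mul_of_nonneg_left hasin pi_pos.le]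

lemma pi_mul_arcsin_sq_lt_of_coeff_nonpos {x : ℝ} (h0 : 7 / 10 ≤ x) (h1 : x < 1)
    (hcoeff : (π ^ 2 + π - 8) * x ^ 4 ≤ π) :
    π * arcsin x ^ 2 < 2 * π * x ^ 2 + ((π ^ 2 + π - 8) * x ^ 4 - π) * (x * arctan x) := by
  have hx : x ≤ 89 / 100 := by
    by_contra! hx
    exact hcoeff.not_gt (pi_lt_coeff_mul_pow_four hx.le)
  have hx0 : 0 ≤ x := by linarith
  set s := √(2 * (1 - x))
  have hs2 : s ^ 2 = 2 * (1 - x) := sq_sqrt (by linarith)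
  have hs : 0 ≤ s := sqrt_nonneg _
  have hasin : arcsin x ^ 2 ≤ (π / 2 - s) ^ 2 := pow_le_pow_left₀
    (arcsin_nonneg.2 hx0) (arcsin_le_pi_div_two_sub_sqrt (by linarith) h1.le) 2
  have hatan := mul_le_mul_of_nonpos_left
    (mul_le_mul_of_nonneg_left (arctan_le_quintic hx0) hx0) (sub_nonpos.2 hcoeff)
  have hxs : x = 1 - s ^ 2 / 2 := by linarith
  linarith [pi_mul_pi_div_two_sub_sq_lt_of_ge (by nlinarith) (by nlinarith) hxs,
    mul_le_mul_of_nonneg_left hasin pi_pos.le]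

lemma pi_mul_arcsin_sq_lt_of_coeff_pos {x : ℝ} (h0 : 0 < x) (h1 : x < 1)
    (hcoeff : π < (π ^ 2 + π - 8) * x ^ 4) :
    π * arcsin x ^ 2 < 2 * π * x ^ 2 + ((π ^ 2 + π - 8) * x ^ 4 - π) * (x * arctan x) := by
  have hx : 88 / 100 ≤ x := by
    by_contra! hx
    exact hcoeff.not_gt (coeff_mul_pow_four_lt_pi h0.le hx.le)
  set s := √(2 * (1 - x))
  have hs2 : s ^ 2 = 2 * (1 - x) := sq_sqrt (by linarith)
  have hs : 0 < s := sqrt_pos.2 (by linarith)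
  have hasin : arcsin x ^ 2 ≤ (π / 2 - s) ^ 2 := pow_le_pow_left₀
    (arcsin_nonneg.2 h0.le) (arcsin_le_pi_div_two_sub_sqrt (by linarith) h1.le) 2
  have hatan := mul_le_mul_of_nonneg_left
    (mul_le_mul_of_nonneg_left (pi_div_four_sub_le_arctan h0.le h1.le) h0.le)
    (sub_nonneg.2 hcoeff.le)
  have hxs : x = 1 - s ^ 2 / 2 := by linarith
  linarith [pi_mul_pi_div_two_sub_sq_lt_of_le hs (by nlinarith) hxs,
    mul_le_mul_of_nonneg_left hasin pi_pos.le]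

lemma pi_mul_arcsin_sq_lt {x : ℝ} (h0 : 0 < x) (h1 : x < 1) :
    π * arcsin x ^ 2 < 2 * π * x ^ 2 + ((π ^ 2 + π - 8) * x ^ 4 - π) * (x * arctan x) := by
  rcases le_or_gt x (7 / 10) with hx | hx
  · exact pi_mul_arcsin_sq_lt_of_le_seven_tenths h0 hx
  rcases le_or_gt ((π ^ 2 + π - 8) * x ^ 4) π with hcoeff | hcoeff
  · exact pi_mul_arcsin_sq_lt_of_coeff_nonpos hx.le h1 hcoeff
  · exact pi_mul_arcsin_sq_lt_of_coeff_pos h0 h1 hcoeff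

theorem stmt0 (x : ℝ) (h1 : 0 < x) (h2 : x < 1) :
    (arcsin x / x)^2 + arctan x / x < 2 + ((π^2 + π - 8)/π) * x^3 * arctan x := by
  have hclear : 2 + (π ^ 2 + π - 8) / π * x ^ 3 * arctan x - ((arcsin x / x) ^ 2 + arctan x / x)
      = (2 * π * x ^ 2 + ((π ^ 2 + π - 8) * x ^ 4 - π) * (x * arctan x) - π * arcsin x ^ 2)
        / (π * x ^ 2) := by
    field_simp
    ring
  rw [← sub_pos, hclear]
  exact div_pos (sub_pos.2 (pi_mul_arcsin_sq_lt h1 h2)) (by positivity)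
end

section
/- For all real x with 0 < x < 1, 2 + (17/45) · x³ · arctan x < (arcsin x / x)^2 + (arctan x / x). -/
/-!
Both functions dominate their degree-7 Taylor polynomials on `(0, 1)`: the differences vanish at
`0` and have positive derivatives, namely `y⁸ / (1 + y²)` for `arctan`, and for `arcsin` the tail
of the binomial series of `(1 - y²)^(-1/2)`. After multiplying by `x²`, the claim is linear in
`arcsin x ^ 2` and in `arctan x`, the latter with the positive coefficient `x - 17/45 x⁵`, so it
suffices to check it with the Taylor polynomials in place of the two functions, which is a
polynomial inequality.
-/

open Real Set

theorem lt_of_hasDerivAt_lt_of_le {f g f' g' : ℝ → ℝ} {a b : ℝ} (hab : a < b)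
    (hf : ContinuousOn f (Icc a b)) (hg : ContinuousOn g (Icc a b))
    (hff' : ∀ y ∈ Ioo a b, HasDerivAt f (f' y) y) (hgg' : ∀ y ∈ Ioo a b, HasDerivAt g (g' y) y)
    (hlt : ∀ y ∈ Ioo a b, g' y < f' y) (ha : g a ≤ f a) : g b < f b := by
  have hmono : StrictMonoOn (f - g) (Icc a b) := by
    refine strictMonoOn_of_deriv_pos (convex_Icc a b) (hf.sub hg) fun y hy => ?_
    rw [interior_Icc] at hy
    rw [((hff' y hy).sub (hgg' y hy)).deriv]
    exact sub_pos.2 (hlt y hy)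
  have := hmono (left_mem_Icc.2 hab.le) (right_mem_Icc.2 hab.le) hab
  simp only [Pi.sub_apply] at this
  linarith

theorem arctan_gt_taylor_seven {x : ℝ} (hx : 0 < x) :
    x - x^3/3 + x^5/5 - x^7/7 < arctan x := by
  refine lt_of_hasDerivAt_lt_of_le (g := fun y => y - y^3/3 + y^5/5 - y^7/7)
    (g' := fun y => 1 - y^2 + y^4 - y^6) hx
    continuous_arctan.continuousOn (by fun_prop) (fun y _ => hasDerivAt_arctan y)
    (fun y _ => ?_) (fun y ⟨hy, _⟩ => ?_) (by simp)
  · refine ((((hasDerivAt_id' y).fun_sub ((hasDerivAt_pow 3 y).div_const 3)).fun_add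
      ((hasDerivAt_pow 5 y).div_const 5)).fun_sub ((hasDerivAt_pow 7 y).div_const 7)).congr_deriv ?_
    norm_num
  · rw [lt_div_iff₀ (by positivity)]
    nlinarith [pow_pos hy 8]

theorem arcsin_gt_taylor_seven {x : ℝ} (hx : 0 < x) (hx1 : x < 1) :
    x + x^3/6 + 3*x^5/40 + 5*x^7/112 < arcsin x := by
  refine lt_of_hasDerivAt_lt_of_le (g := fun y => y + y^3/6 + 3*y^5/40 + 5*y^7/112)
    (g' := fun y => 1 + y^2/2 + 3*y^4/8 + 5*y^6/16) hx
    continuous_arcsin.continuousOn (by fun_prop)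
    (fun y hy => hasDerivAt_arcsin (by linarith [hy.1]) (by linarith [hy.2]))
    (fun y _ => ?_) (fun y ⟨hy, hyx⟩ => ?_) (by simp)
  · refine ((((hasDerivAt_id' y).fun_add ((hasDerivAt_pow 3 y).div_const 6)).fun_add
      (((hasDerivAt_pow 5 y).const_mul 3).div_const 40)).fun_add
      (((hasDerivAt_pow 7 y).const_mul 5).div_const 112)).congr_deriv ?_
    norm_num
    ring
  · have hy2 : 0 < 1 - y^2 := by nlinarith
    rw [one_div, ← sqrt_inv, lt_sqrt (by positivity), ← one_div, lt_div_iff₀ hy2]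
    nlinarith [pow_pos hy 8, pow_pos hy 10, pow_pos hy 12, pow_pos hy 14]

-- The difference of the two sides is `x⁸` times the cubic in `x²` of `hq`.
theorem two_mul_sq_lt_taylor_combination {x : ℝ} (hx : x ≠ 0) :
    2 * x^2 < (x + x^3/6 + 3*x^5/40 + 5*x^7/112)^2
      + (x - x^3/3 + x^5/5 - x^7/7) * (x - 17/45*x^5) := by
  have hq : 0 < 92/945 - 5549/100800*x^2 + 1223/20160*x^4 + 25/12544*x^6 := by
    nlinarith [sq_nonneg (x^2 - 4537/10000), pow_two_nonneg (x^3), sq_nonneg x]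
  nlinarith [mul_pos (pow_pos (sq_pos_of_ne_zero hx) 4) hq]

theorem stmt2 (x : ℝ) (h1 : 0 < x) (h2 : x < 1) :
    2 + (17/45) * x^3 * arctan x < (arcsin x / x)^2 + arctan x / x := by
  have hc : 0 < x - 17/45*x^5 := by
    have : x^4 < 1 := pow_lt_one₀ h1.le h2 (by norm_num)
    nlinarith
  have key : 2 * x^2 < arcsin x ^ 2 + arctan x * (x - 17/45*x^5) :=
    calc 2 * x^2 < _ := two_mul_sq_lt_taylor_combination h1.ne'
      _ < _ := by
        gcongr
        · exact arcsin_gt_taylor_seven h1 h2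
        · exact arctan_gt_taylor_seven h1
  have hdiff : (arcsin x / x)^2 + arctan x / x - (2 + (17/45) * x^3 * arctan x)
      = (arcsin x ^ 2 + arctan x * (x - 17/45*x^5) - 2 * x^2) / x^2 := by
    field_simp
    ring
  linarith [div_pos (sub_pos.2 key) (pow_pos h1 2)]
end

section
/- For all real x with 0 < x < 1, 3 + (7/20) · x³ · arctan x < 2·(arcsin x / x) + (arctan x / x). -/
open Real Set Finset

/-!
Comparing derivatives on `[0, x]` gives the Taylor lower bounds of degree 7 for `arcsin` and
`arctan` and the Taylor upper bound of degree 9 for `arctan`. Substituted into the inequality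
(the `arctan` term on the left carries the positive factor `x³`), the terms of degree 5 cancel and
what remains is `x⁷ (53/840 - 7x²/100 + x⁴/20 - 7x⁶/180) > 0`, true on `(0, 1)`.
-/

lemma lt_of_hasDerivAt_pos {f f' : ℝ → ℝ} {a b : ℝ} (hab : a < b)
    (hf : ContinuousOn f (Icc a b)) (hf' : ∀ y ∈ Ioo a b, HasDerivAt f (f' y) y)
    (hpos : ∀ y ∈ Ioo a b, 0 < f' y) : f a < f b := by
  refine strictMonoOn_of_hasDerivWithinAt_pos (f' := f') (convex_Icc a b) hf (fun y hy => ?_)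
    (fun y hy => ?_) (left_mem_Icc.2 hab.le) (right_mem_Icc.2 hab.le) hab
  · rw [interior_Icc] at hy ⊢
    exact (hf' y hy).hasDerivWithinAt
  · rw [interior_Icc] at hy
    exact hpos y hy

noncomputable def arctanPartialSum (n : ℕ) (x : ℝ) : ℝ :=
  ∑ i ∈ range n, (-1) ^ i * x ^ (2 * i + 1) / (2 * i + 1)

lemma hasDerivAt_arctanPartialSum (n : ℕ) (y : ℝ) :
    HasDerivAt (arctanPartialSum n) ((1 - (-y ^ 2) ^ n) / (1 + y ^ 2)) y := by
  have hterm : ∀ i ∈ range n, HasDerivAt (fun x : ℝ => (-1) ^ i * x ^ (2 * i + 1) / (2 * i + 1))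
      ((-y ^ 2) ^ i) y := fun i _ => by
    refine (((hasDerivAt_pow (2 * i + 1) y).const_mul ((-1 : ℝ) ^ i)).div_const
      (2 * (i : ℝ) + 1)).congr_deriv ?_
    rw [neg_pow (y ^ 2), ← pow_mul, Nat.add_sub_cancel]
    push_cast
    field_simp
  have hgeom : ∑ i ∈ range n, (-y ^ 2) ^ i = (1 - (-y ^ 2) ^ n) / (1 + y ^ 2) := by
    have hne : -y ^ 2 - 1 ≠ 0 := by nlinarith [sq_nonneg y]
    rw [geom_sum_eq (sub_ne_zero.1 hne), div_eq_div_iff hne (by positivity)]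
    ring
  rw [← hgeom]
  exact HasDerivAt.fun_sum hterm

lemma neg_one_pow_mul_arctan_sub_arctanPartialSum_pos (n : ℕ) {x : ℝ} (hx : 0 < x) :
    0 < (-1) ^ n * (arctan x - arctanPartialSum n x) := by
  have hderiv : ∀ y, HasDerivAt (fun y => (-1) ^ n * (arctan y - arctanPartialSum n y))
      ((y ^ 2) ^ n / (1 + y ^ 2)) y := fun y => by
    refine (((hasDerivAt_arctan y).sub (hasDerivAt_arctanPartialSum n y)).const_mul
      ((-1 : ℝ) ^ n)).congr_deriv ?_
    rw [neg_pow (y ^ 2), ← div_sub_div_same, one_div, sub_sub_cancel, mul_div_assoc',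
      ← mul_assoc, ← mul_pow]
    norm_num
  have h := lt_of_hasDerivAt_pos hx (fun y _ => (hderiv y).continuousAt.continuousWithinAt)
    (fun y _ => hderiv y) (fun y hy => by have := hy.1; positivity)
  simpa [arctanPartialSum] using h

lemma taylor_lt_arcsin {x : ℝ} (h0 : 0 < x) (h1 : x < 1) :
    x + x ^ 3 / 6 + 3 * x ^ 5 / 40 + 5 * x ^ 7 / 112 < arcsin x := by
  have hderiv : ∀ y ∈ Ioo 0 x, HasDerivAt
      (fun y => arcsin y - (y + y ^ 3 / 6 + 3 * y ^ 5 / 40 + 5 * y ^ 7 / 112))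
      (1 / √(1 - y ^ 2) - (1 + y ^ 2 / 2 + 3 * (y ^ 2) ^ 2 / 8 + 5 * (y ^ 2) ^ 3 / 16)) y := by
    rintro y ⟨hy0, hyx⟩
    refine ((hasDerivAt_arcsin (by linarith) (by linarith)).sub
      ((((hasDerivAt_id y).add ((hasDerivAt_pow 3 y).div_const 6)).add
      (((hasDerivAt_pow 5 y).const_mul 3).div_const 40)).add
      (((hasDerivAt_pow 7 y).const_mul 5).div_const 112))).congr_deriv ?_
    ring
  have hpos : ∀ y ∈ Ioo 0 x,
      0 < 1 / √(1 - y ^ 2) - (1 + y ^ 2 / 2 + 3 * (y ^ 2) ^ 2 / 8 + 5 * (y ^ 2) ^ 3 / 16) := by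
    rintro y ⟨hy0, hyx⟩
    set t := y ^ 2
    have ht0 : 0 < t := by positivity
    have ht1 : t < 1 := by nlinarith
    -- `1 + t/2 + 3t²/8 + 5t³/16` truncates the binomial series of `(1 - t)^(-1/2)`
    have hsq : (1 + t / 2 + 3 * t ^ 2 / 8 + 5 * t ^ 3 / 16) ^ 2 < (1 - t)⁻¹ := by
      rw [lt_inv_comm₀ (by positivity) (by linarith), ← one_div, lt_div_iff₀ (by positivity)]
      have hexpand : (1 - t) * (1 + t / 2 + 3 * t ^ 2 / 8 + 5 * t ^ 3 / 16) ^ 2 =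
        1 - t ^ 4 * (35 / 64 + 7 / 32 * t + 35 / 256 * t ^ 2 + 25 / 256 * t ^ 3) := by ring
      have hrem : 0 < t ^ 4 * (35 / 64 + 7 / 32 * t + 35 / 256 * t ^ 2 + 25 / 256 * t ^ 3) := by
        positivity
      linarith
    rw [sub_pos, one_div, ← sqrt_inv, lt_sqrt (by positivity)]
    exact hsq
  have h := lt_of_hasDerivAt_pos h0
    (ContinuousOn.sub continuous_arcsin.continuousOn (by fun_prop)) hderiv hpos
  simpa using h

theorem stmt3 (x : ℝ) (h1 : 0 < x) (h2 : x < 1) :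
    3 + (7/20) * x^3 * arctan x < 2 * (arcsin x / x) + arctan x / x := by
  have hasin := taylor_lt_arcsin h1 h2
  have hatan_lower := neg_one_pow_mul_arctan_sub_arctanPartialSum_pos 4 h1
  have hatan_upper := neg_one_pow_mul_arctan_sub_arctanPartialSum_pos 5 h1
  simp only [arctanPartialSum, sum_range_succ, sum_range_zero] at hatan_lower hatan_upper
  norm_num at hatan_lower hatan_upper
  have hpoly : 0 < 53 / 840 - 7 / 100 * x ^ 2 + 1 / 20 * x ^ 4 - 7 / 180 * x ^ 6 := by
    have ht0 : 0 < x ^ 2 := by positivity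
    have ht1 : x ^ 2 < 1 := by nlinarith
    nlinarith [mul_pos ht0 (sub_pos.2 ht1), mul_pos (mul_pos ht0 ht0) (sub_pos.2 ht1)]
  have hupper := mul_lt_mul_of_pos_left hatan_upper (pow_pos h1 4)
  rw [mul_div_assoc', ← add_div, lt_div_iff₀ h1]
  linear_combination 2 * hasin + hatan_lower + 7 / 20 * hupper + x ^ 7 * hpoly
end

section
/- For all real t with 0 ≤ t ≤ π/2, arctan(cos t) ≥ π/4 − t/2, with equality if and only if t = 0 or t = π/2. -/
/-!
Put `u = π/4 - t/2`, so that `cos t = sin 2u` and `sin t = cos 2u`. The identity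
`sin 2u - tan u = tan u · cos 2u` gives `cos t - tan u = tan u · sin t`, which is `≥ 0` on
`[0, π/2]` and vanishes exactly when `tan u = 0` (`t = π/2`) or `sin t = 0` (`t = 0`).
Since `u ∈ (-π/2, π/2)`, comparing `arctan (cos t)` with `u = arctan (tan u)` is the same as
comparing `cos t` with `tan u`.
-/

open Real Set

namespace Real

theorem le_arctan_iff_tan_le {x u : ℝ} (hu : u ∈ Ioo (-(π / 2)) (π / 2)) :
    u ≤ arctan x ↔ tan u ≤ x := by
  conv_lhs => rw [← arctan_tan hu.1 hu.2]
  exact arctan_le_arctan_iff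

theorem arctan_eq_iff_eq_tan {x u : ℝ} (hu : u ∈ Ioo (-(π / 2)) (π / 2)) :
    arctan x = u ↔ x = tan u := by
  conv_lhs => rw [← arctan_tan hu.1 hu.2]
  exact arctan_inj

theorem tan_eq_zero_iff_of_mem_Ioo {u : ℝ} (hu : u ∈ Ioo (-(π / 2)) (π / 2)) :
    tan u = 0 ↔ u = 0 := by
  have h0 : (0 : ℝ) ∈ Ioo (-(π / 2)) (π / 2) := ⟨by linarith [pi_pos], by linarith [pi_pos]⟩
  simpa using injOn_tan.eq_iff hu h0

/-- Holds for all `u`: where `cos u = 0`, both sides vanish by the junk value `tan u = 0`. -/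
theorem sin_two_mul_sub_tan (u : ℝ) : sin (2 * u) - tan u = tan u * cos (2 * u) := by
  rw [tan_eq_sin_div_cos, sin_two_mul, cos_two_mul]
  rcases eq_or_ne (cos u) 0 with hc | hc
  · simp [hc]
  · field_simp

theorem cos_sub_tan_pi_div_four_sub_half (t : ℝ) :
    cos t - tan (π / 4 - t / 2) = tan (π / 4 - t / 2) * sin t := by
  have h := sin_two_mul_sub_tan (π / 4 - t / 2)
  rwa [show 2 * (π / 4 - t / 2) = π / 2 - t by ring, sin_pi_div_two_sub,
    cos_pi_div_two_sub] at h

end Real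

theorem stmt6 :
    (∀ t : ℝ, 0 ≤ t → t ≤ π/2 → arctan (cos t) ≥ π/4 - t/2) ∧
    (∀ t : ℝ, 0 ≤ t → t ≤ π/2 → (arctan (cos t) = π/4 - t/2 ↔ t = 0 ∨ t = π/2)) := by
  have hu : ∀ t : ℝ, 0 ≤ t → t ≤ π/2 → π/4 - t/2 ∈ Ioo (-(π / 2)) (π / 2) := fun t h0 h1 =>
    ⟨by linarith [pi_pos], by linarith [pi_pos]⟩
  refine ⟨fun t h0 h1 => ?_, fun t h0 h1 => ?_⟩
  · rw [ge_iff_le, le_arctan_iff_tan_le (hu t h0 h1), ← sub_nonneg,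
      cos_sub_tan_pi_div_four_sub_half]
    exact mul_nonneg (tan_nonneg_of_nonneg_of_le_pi_div_two (by linarith) (by linarith))
      (sin_nonneg_of_nonneg_of_le_pi h0 (by linarith [pi_pos]))
  · rw [arctan_eq_iff_eq_tan (hu t h0 h1), ← sub_eq_zero, cos_sub_tan_pi_div_four_sub_half,
      mul_eq_zero, or_comm]
    refine or_congr ?_ ?_
    · exact sin_eq_zero_iff_of_lt_of_lt (by linarith [pi_pos]) (by linarith [pi_pos])
    · rw [tan_eq_zero_iff_of_mem_Ioo (hu t h0 h1)]
      constructor <;> intro h <;> linarith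
end

section
/- For all real t with 0 < t < π/2 − 1.1, ((−π²/2 − π/2 + 4)t + π³/4 + π²/4 − 2π)·cos⁵t + 2π·cos²t + ((π/2)t − π²/4)·cos t − πt² + π²t − π³/4 > 0. -/
/-!
Write `c = cos t`. Bernoulli's inequality gives `c ^ n ≥ 1 + n (c - 1)` (as `c ≥ -1`), and the
coefficients of `c ^ 5` and `c ^ 2` are nonnegative, so the expression is bounded below by an affine
function of `c`. Its value at `c = 1` is `(π² / 2 + 4) t - π t²` and its slope `K` is nonnegative,
so `1 - c ≤ t² / 2` leaves the lower bound `t ((π² / 2 + 4) - t (π + K / 2))`, which is positive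
for `0 < t < π / 2 - 1.1` by crude bounds on `π`.
-/

open Real

lemma one_add_mul_cos_sub_one_le_cos_pow (n : ℕ) (t : ℝ) : 1 + n * (cos t - 1) ≤ cos t ^ n := by
  simpa using one_add_mul_le_pow (by linarith [neg_one_le_cos t] : -2 ≤ cos t - 1) n

theorem stmt14 (t : ℝ) (h1 : 0 < t) (h2 : t < π/2 - 1.1) :
    ((-π^2/2 - π/2 + 4)*t + π^3/4 + π^2/4 - 2*π)*(cos t)^5
    + 2*π*(cos t)^2 + ((π/2)*t - π^2/4)*cos t - π*t^2 + π^2*t - π^3/4 > 0 := by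
  have hπ₀ : 3.14 < π := pi_gt_d2
  have hπ₁ : π < 3.15 := pi_lt_d2
  have ht : t < 0.475 := by linarith
  have hπsq₀ : 9.85 < π^2 := by nlinarith
  have hπsq₁ : π^2 < 9.93 := by nlinarith
  set A := (-π^2/2 - π/2 + 4)*t + π^3/4 + π^2/4 - 2*π with hA_def
  set K := 5*A + 4*π + ((π/2)*t - π^2/4) with hK_def
  -- `A` decreases in `t`, so it is at least its value at `t = 0.475`
  have hslope : 0 ≤ (π^2/2 + π/2 - 4) * (0.475 - t) := mul_nonneg (by linarith) (by linarith)
  have hA : 0 ≤ A := by nlinarith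
  have hK₀ : 0 ≤ K := by nlinarith
  have hK₁ : K ≤ 30.2 := by nlinarith
  have hlow : 0 < t * ((π^2/2 + 4) - t*(π + K/2)) := mul_pos h1 (by nlinarith)
  have hquint := one_add_mul_cos_sub_one_le_cos_pow 5 t
  have hsq := one_add_mul_cos_sub_one_le_cos_pow 2 t
  push_cast at hquint hsq
  linear_combination hlow + A * hquint + 2*π * hsq + K * one_sub_sq_div_two_le_cos (x := t)
end

section
/- For all real t with 0 < t < π/2 − 1.3, ((6 − 5π/2)t + 5π²/4 − 3π)·cos⁴t + 3π·cos t + (5π/2)t − 5π²/4 > 0. -/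
open Real
theorem stmt15 (t : ℝ) (h1 : 0 < t) (h2 : t < π/2 - 1.3) :
    ((6 - 5*π/2)*t + 5*π^2/4 - 3*π)*(cos t)^4 + 3*π*cos t + (5*π/2)*t - 5*π^2/4 > 0 := by
  have hπl : (3.141592 : ℝ) < π := by have := Real.pi_gt_d6; linarith
  have hπu : π < 3.15 := Real.pi_lt_d2
  have ht : t < 0.28 := by linarith
  have hc : 1 - t^2/2 ≤ cos t := Real.one_sub_sq_div_two_le_cos
  have hq : (0:ℝ) ≤ 1 - t^2/2 := by nlinarith
  have hc4 : 1 - 2*t^2 ≤ (cos t)^4 := by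
    have h4 : (1 - t^2/2)^4 ≤ (cos t)^4 := by
      have := pow_le_pow_left₀ hq hc 4
      simpa using this
    nlinarith [sq_nonneg t, sq_nonneg (t^2), pow_pos h1 6, pow_pos h1 8, sq_nonneg (t^3)]
  have hA : (0:ℝ) < (6 - 5*π/2)*t + 5*π^2/4 - 3*π := by nlinarith
  have hAu : (6 - 5*π/2)*t + 5*π^2/4 - 3*π ≤ 5*π^2/4 - 3*π := by nlinarith
  have k1 : 0 ≤ ((6 - 5*π/2)*t + 5*π^2/4 - 3*π) * ((cos t)^4 - (1 - 2*t^2)) :=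
    mul_nonneg hA.le (by linarith)
  have k2 : 0 ≤ 3*π * (cos t - (1 - t^2/2)) := by
    apply mul_nonneg (by linarith) (by linarith)
  have hπ2 : π^2 < 9.9225 := by nlinarith
  have k3 : 2*t^2 * ((6 - 5*π/2)*t + 5*π^2/4 - 3*π) ≤ 2*t^2 * (5*π^2/4 - 3*π) := by
    apply mul_le_mul_of_nonneg_left hAu (by positivity)
  have k4 : t^2 < 0.0784 := by nlinarith
  have k5 : t^2 * π^2 < 0.0784 * 9.9225 := by
    apply mul_lt_mul'' k4 hπ2 (by positivity) (by positivity)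
  nlinarith [k1, k2, k3, k5, mul_pos h1 h1, sq_nonneg t,
    mul_lt_mul'' k4 hπu (by positivity : (0:ℝ) ≤ t^2) (by linarith : (0:ℝ) ≤ π)]
end

section
/- For all real t with 0 < t ≤ 1.1, 2π·sin²t + (π² + π − 8)·sin⁵t·(sin t − sin³t/3) − π·sin t·(sin t − sin³t/3 + sin⁵t/5) − πt² > 0. -/
/-!
Write `s = sin t`. The expression equals `π (s² - t²) + π s⁴ / 3 + c(s) s⁶` with
`c(s) = (π² + π - 8)(1 - s²/3) - π/5 ≥ c(1) > 2.712`. From `t - t³/6 ≤ s ≤ t` we get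
`t² - s² ≤ t⁴/3`, so the expression is at least `-π t⁴/3 + π u⁴/3 + 2.712 u⁶` with
`u = t - t³/6 = t (1 - x/6)`, `x = t²`. This is `t⁴` times a polynomial in `x`, positive on
`(0, 1.21]` by Bernoulli's inequality and a numerical check at the endpoint `x = 1.21`.
-/

open Real

lemma sq_sub_sq_sin_le {t : ℝ} (ht : 0 ≤ t) : t ^ 2 - sin t ^ 2 ≤ t ^ 4 / 3 := by
  calc t ^ 2 - sin t ^ 2 = (t - sin t) * (t + sin t) := by ring
    _ ≤ (t - sin t) * (2 * t) := by gcongr <;> linarith [sin_le ht]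
    _ ≤ t ^ 3 / 6 * (2 * t) := by gcongr; linarith [sin_ge_sub_cube ht]
    _ = t ^ 4 / 3 := by ring

lemma sixth_coeff_ge_of_sq_le_one {s : ℝ} (hs : s ^ 2 ≤ 1) :
    2.712 ≤ (π ^ 2 + π - 8) * (1 - s ^ 2 / 3) - π / 5 := by
  have hpi₁ := pi_gt_d4
  have hpi₂ := pi_lt_d4
  have hpos : 0 ≤ π ^ 2 + π - 8 := by nlinarith
  nlinarith [mul_nonneg (sub_nonneg.mpr hs) hpos]

lemma pi_mul_one_sub_pow_four_lt {x : ℝ} (hx₀ : 0 < x) (hx : x ≤ 1.21) :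
    π * (1 - (1 - x / 6) ^ 4) / 3 < 2.712 * x * (1 - x / 6) ^ 6 := by
  have hbernoulli : 1 + 4 * (-(x / 6)) ≤ (1 - x / 6) ^ 4 := by
    simpa [sub_eq_add_neg] using one_add_mul_le_pow (a := -(x / 6)) (by linarith) 4
  have hendpoint : (1 - 1.21 / 6 : ℝ) ^ 6 ≤ (1 - x / 6) ^ 6 :=
    pow_le_pow_left₀ (by norm_num) (by linarith) 6
  have hpi := pi_lt_d2
  calc π * (1 - (1 - x / 6) ^ 4) / 3 ≤ π * (2 * x / 3) / 3 := by gcongr; linarith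
    _ < 2.712 * x * (1 - 1.21 / 6) ^ 6 := by nlinarith
    _ ≤ 2.712 * x * (1 - x / 6) ^ 6 := by gcongr

lemma taylor_lower_bound_pos {t : ℝ} (ht₀ : 0 < t) (ht : t ≤ 1.1) :
    0 < -π * t ^ 4 / 3 + π * (t - t ^ 3 / 6) ^ 4 / 3 + 2.712 * (t - t ^ 3 / 6) ^ 6 := by
  have hx : t ^ 2 ≤ 1.21 := by nlinarith
  have key := pi_mul_one_sub_pow_four_lt (pow_pos ht₀ 2) hx
  have h4 := pow_pos ht₀ 4
  calc 0 < t ^ 4 * (2.712 * t ^ 2 * (1 - t ^ 2 / 6) ^ 6 - π * (1 - (1 - t ^ 2 / 6) ^ 4) / 3) := by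
        apply mul_pos h4; linarith
    _ = _ := by ring

theorem stmt16 (t : ℝ) (h1 : 0 < t) (h2 : t ≤ 1.1) :
    2*π*(sin t)^2 + (π^2 + π - 8)*(sin t)^5*(sin t - (sin t)^3/3)
    - π*sin t*(sin t - (sin t)^3/3 + (sin t)^5/5) - π*t^2 > 0 := by
  set s := sin t
  set u := t - t ^ 3 / 6
  have hu : 0 ≤ u := by
    have : u = t * (1 - t ^ 2 / 6) := by ring
    rw [this]; exact mul_nonneg h1.le (by nlinarith)
  have hus : u ≤ s := sin_ge_sub_cube h1.le
  have hts : t ^ 2 - s ^ 2 ≤ t ^ 4 / 3 := sq_sub_sq_sin_le h1.le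
  have hc := sixth_coeff_ge_of_sq_le_one (sin_sq_le_one t)
  have h4 : u ^ 4 ≤ s ^ 4 := pow_le_pow_left₀ hu hus 4
  have h6 : u ^ 6 ≤ s ^ 6 := pow_le_pow_left₀ hu hus 6
  calc 0 < -π * t ^ 4 / 3 + π * u ^ 4 / 3 + 2.712 * u ^ 6 := taylor_lower_bound_pos h1 h2
    _ ≤ π * (s ^ 2 - t ^ 2) + π * s ^ 4 / 3
          + ((π ^ 2 + π - 8) * (1 - s ^ 2 / 3) - π / 5) * s ^ 6 := by
      linarith [mul_le_mul_of_nonneg_left hts pi_pos.le, mul_le_mul_of_nonneg_left h4 pi_pos.le,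
        mul_le_mul hc h6 (pow_nonneg hu 6) (by linarith)]
    _ = _ := by ring
end

section
/- For all real t with 0 < t ≤ 1.3, 3π·sin t + (5π − 12)·sin⁴t·(sin t − sin³t/3) − π·(sin t − sin³t/3 + sin⁵t/5) − 2πt > 0. -/
/-!
Write `s = sin t`. The expression equals
`π (2 (s - t) + s³/3) + s⁵ ((24π/5 - 12) - (5π - 12) s²/3)`.
The first summand is increasing in `s`, and since `s ≤ 1` the bracket of the second is at least
`47π/15 - 8 > 1.84`. Replacing `s` by the Taylor lower bound `t - t³/6 + t⁵/120 - t⁷/5040 ≤ sin t`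
leaves a polynomial inequality in `t` on `(0, 1.3]`. The Taylor bound comes from the alternating
signs of the remainders of the Taylor polynomials of `sin` and `cos` on `[0, ∞)`: each remainder
vanishes at `0` and its derivative is, up to sign, the other one, so the signs propagate by
induction.
-/

open Real

noncomputable def sinTaylor (n : ℕ) (x : ℝ) : ℝ :=
  ∑ k ∈ Finset.range n, (-1) ^ k * x ^ (2 * k + 1) / (2 * k + 1).factorial

noncomputable def cosTaylor (n : ℕ) (x : ℝ) : ℝ :=
  ∑ k ∈ Finset.range n, (-1) ^ k * x ^ (2 * k) / (2 * k).factorial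

theorem hasDerivAt_sinTaylor (n : ℕ) (x : ℝ) : HasDerivAt (sinTaylor n) (cosTaylor n x) x := by
  have term (k : ℕ) : HasDerivAt (fun y : ℝ => (-1) ^ k * y ^ (2 * k + 1) / (2 * k + 1).factorial)
      ((-1) ^ k * x ^ (2 * k) / (2 * k).factorial) x := by
    refine (((hasDerivAt_pow (2 * k + 1) x).const_mul ((-1 : ℝ) ^ k)).div_const
      ((2 * k + 1).factorial : ℝ)).congr_deriv ?_
    rw [Nat.factorial_succ]
    push_cast
    field_simp
  exact HasDerivAt.fun_sum fun k _ => term k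

theorem hasDerivAt_cosTaylor (n : ℕ) (x : ℝ) :
    HasDerivAt (cosTaylor (n + 1)) (-sinTaylor n x) x := by
  have term (k : ℕ) :
      HasDerivAt (fun y : ℝ => (-1) ^ (k + 1) * y ^ (2 * (k + 1)) / (2 * (k + 1)).factorial)
      (-((-1) ^ k * x ^ (2 * k + 1) / (2 * k + 1).factorial)) x := by
    refine (((hasDerivAt_pow (2 * (k + 1)) x).const_mul ((-1 : ℝ) ^ (k + 1))).div_const
      ((2 * (k + 1)).factorial : ℝ)).congr_deriv ?_
    rw [show 2 * (k + 1) = 2 * k + 1 + 1 by ring, Nat.factorial_succ]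
    push_cast
    field_simp
    ring
  unfold sinTaylor cosTaylor
  simp only [Finset.sum_range_succ', mul_zero, pow_zero, ← Finset.sum_neg_distrib]
  exact (HasDerivAt.fun_sum (u := Finset.range n) fun k _ => term k).add_const _

theorem nonneg_of_hasDerivAt_nonneg {f f' : ℝ → ℝ} (hf : ∀ x, HasDerivAt f (f' x) x)
    (h0 : f 0 = 0) (hf' : ∀ x, 0 ≤ x → 0 ≤ f' x) {x : ℝ} (hx : 0 ≤ x) : 0 ≤ f x := by
  have hmono : MonotoneOn f (Set.Ici 0) :=
    monotoneOn_of_hasDerivWithinAt_nonneg (convex_Ici 0)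
      (fun y _ => (hf y).continuousAt.continuousWithinAt)
      (fun y _ => (hf y).hasDerivWithinAt)
      (fun y hy => hf' y (interior_subset hy))
  simpa [h0] using hmono Set.self_mem_Ici hx hx

theorem sinTaylor_error_sign_of_cos {n : ℕ}
    (hcos : ∀ y, 0 ≤ y → 0 ≤ (-1) ^ n * (cos y - cosTaylor n y)) {x : ℝ} (hx : 0 ≤ x) :
    0 ≤ (-1) ^ n * (sin x - sinTaylor n x) :=
  nonneg_of_hasDerivAt_nonneg (f := fun y => (-1) ^ n * (sin y - sinTaylor n y))
    (fun y => ((hasDerivAt_sin y).sub (hasDerivAt_sinTaylor n y)).const_mul _)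
    (by simp [sinTaylor]) hcos hx

theorem cosTaylor_error_sign_of_sin {n : ℕ}
    (hsin : ∀ y, 0 ≤ y → 0 ≤ (-1) ^ n * (sin y - sinTaylor n y)) {x : ℝ} (hx : 0 ≤ x) :
    0 ≤ (-1) ^ (n + 1) * (cos x - cosTaylor (n + 1) x) :=
  nonneg_of_hasDerivAt_nonneg (f := fun y => (-1) ^ (n + 1) * (cos y - cosTaylor (n + 1) y))
    (fun y => ((hasDerivAt_cos y).sub (hasDerivAt_cosTaylor n y)).const_mul _)
    (by simp [cosTaylor, Finset.sum_range_succ'])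
    (fun y hy => by convert hsin y hy using 1; ring) hx

theorem cosTaylor_error_sign (n : ℕ) {x : ℝ} (hx : 0 ≤ x) :
    0 ≤ (-1) ^ (n + 1) * (cos x - cosTaylor (n + 1) x) := by
  induction n generalizing x with
  | zero => simpa [cosTaylor] using cos_le_one x
  | succ n ih =>
    exact cosTaylor_error_sign_of_sin (fun _ hy => sinTaylor_error_sign_of_cos (fun _ => ih) hy) hx

theorem sinTaylor_error_sign (n : ℕ) {x : ℝ} (hx : 0 ≤ x) :
    0 ≤ (-1) ^ (n + 1) * (sin x - sinTaylor (n + 1) x) :=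
  sinTaylor_error_sign_of_cos (fun _ hy => cosTaylor_error_sign n hy) hx

theorem sinTaylor_four (x : ℝ) : sinTaylor 4 x = x - x ^ 3 / 6 + x ^ 5 / 120 - x ^ 7 / 5040 := by
  simp [sinTaylor, Finset.sum_range_succ, Nat.factorial]
  ring

theorem sinTaylor_four_le_sin {x : ℝ} (hx : 0 ≤ x) : sinTaylor 4 x ≤ sin x := by
  have := sinTaylor_error_sign 3 hx
  norm_num at this
  linarith

section Polynomial

variable {t : ℝ}

-- In both polynomials the `t³` terms cancel, so they are of exact order `t⁵` at `0`.
theorem two_mul_sinTaylor_four_sub_add_cube_nonpos (ht : 0 ≤ t) (h : t ≤ 1.3) :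
    2 * (sinTaylor 4 t - t) + sinTaylor 4 t ^ 3 / 3 ≤ 0 := by
  have g (k : ℕ) : 0 ≤ t ^ k * (1.3 - t) := mul_nonneg (pow_nonneg ht k) (by linarith)
  have p (k : ℕ) : 0 ≤ t ^ k := pow_nonneg ht k
  rw [sinTaylor_four]
  linarith [g 5, g 6, g 7, g 8, g 9, g 10, g 11, g 12, g 13, g 14, g 15, g 16, g 17, g 18, g 19,
    g 20, p 5, p 7, p 9, p 11, p 13, p 15, p 17, p 19, p 21]

theorem sinTaylor_four_bound_pos (ht : 0 < t) (h : t ≤ 1.3) :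
    0 < 3.1416 * (2 * (sinTaylor 4 t - t) + sinTaylor 4 t ^ 3 / 3) + 1.84 * sinTaylor 4 t ^ 5 := by
  have hu : t ^ 2 ≤ 1.69 := by nlinarith
  have g (k : ℕ) : 0 ≤ t ^ k * (1.69 - t ^ 2) := mul_nonneg (pow_nonneg ht.le k) (by linarith)
  have p (k : ℕ) : 0 ≤ t ^ k := pow_nonneg ht.le k
  have q (k : ℕ) : 0 ≤ t ^ k * (t ^ 2 - 1.69) ^ 2 := mul_nonneg (pow_nonneg ht.le k) (sq_nonneg _)
  rw [sinTaylor_four]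
  linarith [q 5, q 9, g 5, g 7, g 9, g 11, g 13, g 15, g 17, g 19, g 21, g 23, g 25, g 27, g 29,
    g 31, g 33, p 5, p 7, p 9, p 11, p 13, p 15, p 17, p 19, p 21, p 23, p 25, p 27, p 29, p 31,
    p 33, p 35, pow_pos ht 5]

end Polynomial

theorem lower_bound_of_le_of_le_one {p s t L : ℝ} (hp : 3.1415 < p) (hp' : p < 3.1416)
    (hs0 : 0 ≤ s) (hLs : L ≤ s) (hs1 : s ≤ 1) (hneg : 2 * (L - t) + L ^ 3 / 3 ≤ 0) :
    3.1416 * (2 * (L - t) + L ^ 3 / 3) + 1.84 * L ^ 5 ≤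
      3 * p * s + (5 * p - 12) * s ^ 4 * (s - s ^ 3 / 3) - p * (s - s ^ 3 / 3 + s ^ 5 / 5)
        - 2 * p * t := by
  have hcube : L ^ 3 ≤ s ^ 3 := (Odd.pow_le_pow (by decide)).2 hLs
  have hquint : L ^ 5 ≤ s ^ 5 := (Odd.pow_le_pow (by decide)).2 hLs
  have hbracket : 1.84 ≤ (24 * p / 5 - 12) - (5 * p - 12) * s ^ 2 / 3 := by
    nlinarith [pow_le_one₀ hs0 hs1 (n := 2)]
  calc 3.1416 * (2 * (L - t) + L ^ 3 / 3) + 1.84 * L ^ 5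
      ≤ p * (2 * (L - t) + L ^ 3 / 3) + 1.84 * L ^ 5 := by nlinarith
    _ ≤ p * (2 * (s - t) + s ^ 3 / 3) + s ^ 5 * ((24 * p / 5 - 12) - (5 * p - 12) * s ^ 2 / 3) := by
      nlinarith [pow_nonneg hs0 5]
    _ = _ := by ring

theorem stmt17 (t : ℝ) (h1 : 0 < t) (h2 : t ≤ 1.3) :
    3*π*sin t + (5*π - 12)*(sin t)^4*(sin t - (sin t)^3/3)
    - π*(sin t - (sin t)^3/3 + (sin t)^5/5) - 2*π*t > 0 := by
  have hsin : 0 ≤ sin t := sin_nonneg_of_nonneg_of_le_pi h1.le (by linarith [pi_gt_three])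
  exact (sinTaylor_four_bound_pos h1 h2).trans_le <|
    lower_bound_of_le_of_le_one pi_gt_d4 pi_lt_d4 hsin (sinTaylor_four_le_sin h1.le) (sin_le_one t)
      (two_mul_sinTaylor_four_sub_add_cube_nonpos h1.le h2)
end

section
/- For all real x with 0 < |x| < π/2, 2·(sin x / x) + (tan x / x) > 3. -/
/-!
The function `f t = 2 sin t + tan t - 3 t` vanishes at `0`, and its derivative
`2 cos t + 1 / cos² t - 3` is positive on `(0, π/2)` by AM–GM applied to `cos t, cos t, 1 / cos² t`.
Hence `f x > 0` for `0 < x < π/2`; dividing by `x` gives the inequality, and its left side is even.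
-/

open Real Set

lemma three_lt_two_mul_add_one_div_sq {c : ℝ} (hc : 0 < c) (hc1 : c ≠ 1) :
    3 < 2 * c + 1 / c ^ 2 := by
  have hsq : 0 < (c - 1) ^ 2 := by
    have : c - 1 ≠ 0 := sub_ne_zero.mpr hc1
    positivity
  have key : 0 < (c - 1) ^ 2 * (2 * c + 1) := by positivity
  rw [← sub_pos, show 2 * c + 1 / c ^ 2 - 3 = (c - 1) ^ 2 * (2 * c + 1) / c ^ 2 by
    field_simp; ring]
  positivity

lemma strictMonoOn_two_mul_sin_add_tan_sub_three_mul :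
    StrictMonoOn (fun t => 2 * sin t + tan t - 3 * t) (Ico 0 (π / 2)) := by
  have hcos_pos : ∀ t ∈ Ico 0 (π / 2), 0 < cos t := fun t ht =>
    cos_pos_of_mem_Ioo ⟨by linarith [pi_pos, ht.1], ht.2⟩
  have hcont : ContinuousOn tan (Ico 0 (π / 2)) :=
    continuousOn_tan.mono fun t ht => (hcos_pos t ht).ne'
  refine strictMonoOn_of_hasDerivWithinAt_pos (convex_Ico 0 (π / 2))
    (by fun_prop) (f' := fun t => 2 * cos t + 1 / cos t ^ 2 - 3) (fun t ht => ?_) fun t ht => ?_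
  · have hc := hcos_pos t (interior_subset ht)
    exact ((((hasDerivAt_sin t).const_mul 2).add (hasDerivAt_tan hc.ne')).sub
      ((hasDerivAt_id t).const_mul 3) |>.congr_deriv (by simp)).hasDerivWithinAt
  · rw [interior_Ico] at ht
    have hc1 : cos t ≠ 1 := fun h => ht.1.ne' <|
      (cos_eq_one_iff_of_lt_of_lt (by linarith [pi_pos, ht.1]) (by linarith [pi_pos, ht.2])).mp h
    exact sub_pos.mpr (three_lt_two_mul_add_one_div_sq (hcos_pos t (Ioo_subset_Ico_self ht)) hc1)

lemma three_mul_lt_two_mul_sin_add_tan {x : ℝ} (hx : 0 < x) (hx' : x < π / 2) :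
    3 * x < 2 * sin x + tan x := by
  have := strictMonoOn_two_mul_sin_add_tan_sub_three_mul
    (left_mem_Ico.mpr (by positivity)) ⟨hx.le, hx'⟩ hx
  simp only [sin_zero, tan_zero] at this
  linarith

theorem stmt19 (x : ℝ) (h1 : 0 < |x|) (h2 : |x| < π/2) :
    2 * (sin x / x) + tan x / x > 3 := by
  wlog hx : 0 < x generalizing x
  · have hneg : 0 < -x := neg_pos.mpr ((not_lt.mp hx).lt_of_ne (abs_pos.mp h1))
    have := this (-x) (by rwa [abs_neg]) (by rwa [abs_neg]) hneg
    rwa [sin_neg, tan_neg, neg_div_neg_eq, neg_div_neg_eq] at this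
  rw [abs_of_pos hx] at h2
  have key := three_mul_lt_two_mul_sin_add_tan hx h2
  rw [gt_iff_lt, ← mul_div_assoc, ← add_div, lt_div_iff₀ hx]
  linarith
end
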